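/- arXiv:1912.11758 — 8 statements merged into one kernel-verified Lean document; each statement's English description precedes it below -/
import Mathlib

section
/- Let G be a finite group of odd order p, let v₁, v₂ ∈ 𝔽₂[G] (where 𝔽₂ = ZMod 2) and γ₁, γ₂, γ₃, γ₄ ∈ 𝔽₂. Let A be the (p+1)×(p+1) matrix over 𝔽₂, indexed by Option G, whose (none,none) entry is γ₁, whose other entries in the first row and first column are γ₂, and whose (some g, some h) entry is σ(v₁)(g,h); let B be defined analogously from γ₃, γ₄ and v₂, and let M be the 2(p+1)×2(p+1) block matrix with block rows (A, B) and (Bᵀ, Aᵀ). Suppose: (1) v₁v₂ = v₂v₁; (2) γ₁² + γ₂² + γ₃² + γ₄² = 1; (3) v₁v₁* + v₂v₂* + (γ₂+γ₄)²·ĝ + 1 = 0; (4) v₁*v₁ + v₂*v₂ + (γ₂+γ₄)²·ĝ + 1 = 0; (5) γ₁ equals the sum of the coefficients of v₁ and γ₃ equals the sum of the coefficients of v₂. Then the linear code C_σ of length 4p+4 over 𝔽₂ spanned by the rows of the matrix [I_{2p+2} | M] is self-dual, i.e. C_σ = C_σ⊥. -/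
open Matrix

/-- `σ(v)`: the `G × G` matrix whose `(g,h)` entry is the coefficient of `v` at `g⁻¹h`. -/
noncomputable def sigmaMat {R : Type*} [CommRing R] {G : Type*} [Group G] [Fintype G]
    (v : MonoidAlgebra R G) : Matrix G G R :=
  Matrix.of fun g h => v.coeff (g⁻¹ * h)

/-- The canonical involution `v* = ∑ α_g g⁻¹`. -/
noncomputable def grInvol {R : Type*} [CommRing R] {G : Type*} [Group G]
    (v : MonoidAlgebra R G) : MonoidAlgebra R G :=
  MonoidAlgebra.ofCoeff (Finsupp.equivMapDomain (Equiv.inv G) v.coeff)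

/-- `ĝ = ∑_{g ∈ G} g` in the group algebra. -/
noncomputable def ghat (R : Type*) [CommRing R] (G : Type*) [Group G] [Fintype G] :
    MonoidAlgebra R G :=
  ∑ g : G, MonoidAlgebra.of R G g

/-- The dual of a linear code `C ⊆ Rⁿ` with respect to the form `∑ᵢ vᵢ wᵢ`. -/
def dualCode {R : Type*} [CommRing R] {ι : Type*} [Fintype ι]
    (C : Submodule R (ι → R)) : Submodule R (ι → R) where
  carrier := {w | ∀ v ∈ C, ∑ i, v i * w i = 0}
  zero_mem' := by intro v _; simp
  add_mem' := by
    intro a b ha hb v hv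
    have h1 := ha v hv
    have h2 := hb v hv
    simp only [Pi.add_apply, mul_add, Finset.sum_add_distrib, h1, h2, add_zero]
  smul_mem' := by
    intro c w hw v hv
    have h := hw v hv
    have : ∑ i, v i * (c • w) i = c * ∑ i, v i * w i := by
      rw [Finset.mul_sum]
      exact Finset.sum_congr rfl fun i _ => by
        simp [smul_eq_mul, mul_left_comm]
    simp only [Set.mem_setOf_eq] at *
    simpa [h] using this

section lemmas
set_option linter.unusedSectionVars false
variable {R : Type*} [CommRing R] {G : Type*} [Group G] [Fintype G] [DecidableEq G]

lemma grInvol_apply (v : MonoidAlgebra R G) (x : G) : (grInvol v).coeff x = v.coeff x⁻¹ := rfl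

lemma mul_apply_full (v w : MonoidAlgebra R G) (x : G) :
    (v * w).coeff x = ∑ a : G, v.coeff a * w.coeff (a⁻¹ * x) := by
  rw [MonoidAlgebra.coeff_mul_apply_left, Finsupp.sum_fintype]
  intro a; rw [zero_mul]

lemma sigma_mul (v w : MonoidAlgebra R G) :
    sigmaMat (v * w) = sigmaMat v * sigmaMat w := by
  ext g h
  simp only [sigmaMat, Matrix.mul_apply, Matrix.of_apply, mul_apply_full]
  refine Fintype.sum_equiv (Equiv.mulLeft g) _ _ fun a => ?_
  simp [mul_assoc]

lemma sigma_transpose (v : MonoidAlgebra R G) :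
    (sigmaMat v)ᵀ = sigmaMat (grInvol v) := by
  ext g h
  simp [sigmaMat, grInvol_apply]

lemma sigma_one : sigmaMat (1 : MonoidAlgebra R G) = 1 := by
  ext g h
  show (1 : MonoidAlgebra R G).coeff (g⁻¹ * h) = (1 : Matrix G G R) g h
  rw [Matrix.one_apply, MonoidAlgebra.one_def, MonoidAlgebra.coeff_single, Finsupp.single_apply]
  by_cases hgh : g = h <;> simp [hgh, eq_comm, inv_mul_eq_one]

lemma ghat_apply (x : G) : (ghat R G).coeff x = 1 := by
  classical
  rw [ghat]
  rw [MonoidAlgebra.coeff_sum, Finset.sum_apply']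
  simp [MonoidAlgebra.of_apply, MonoidAlgebra.coeff_single, Finsupp.single_apply]

lemma sigma_rowsum (v : MonoidAlgebra R G) (g : G) :
    ∑ k, sigmaMat v g k = ∑ x, v.coeff x := by
  refine Fintype.sum_equiv (Equiv.mulLeft g⁻¹) _ _ fun k => ?_
  simp [sigmaMat]

lemma sigma_colsum (v : MonoidAlgebra R G) (h : G) :
    ∑ k, sigmaMat v k h = ∑ x, v.coeff x := by
  refine Fintype.sum_equiv ((Equiv.inv G).trans (Equiv.mulRight h)) _ _ fun k => ?_
  simp [sigmaMat]

lemma sigma_add (v w : MonoidAlgebra R G) :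
    sigmaMat (v + w) = sigmaMat v + sigmaMat w := by
  ext g h
  exact Finsupp.add_apply v.coeff w.coeff _

lemma sigma_smul (r : R) (v : MonoidAlgebra R G) :
    sigmaMat (r • v) = r • sigmaMat v := by
  ext g h
  rw [Matrix.smul_apply]
  exact Finsupp.smul_apply r v.coeff _

lemma sigma_zero : sigmaMat (0 : MonoidAlgebra R G) = 0 := by
  ext g h; simp [sigmaMat]

lemma sigma_dot (v w : MonoidAlgebra R G) (g h : G) :
    ∑ k, sigmaMat v g k * sigmaMat w h k = sigmaMat (v * grInvol w) g h := by
  have : sigmaMat (v * grInvol w) g h = (sigmaMat v * (sigmaMat w)ᵀ) g h := by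
    rw [sigma_transpose, ← sigma_mul]
  rw [this, Matrix.mul_apply]
  simp [Matrix.transpose_apply]

lemma sigma_dot' (v w : MonoidAlgebra R G) (g h : G) :
    ∑ k, sigmaMat v k g * sigmaMat w k h = sigmaMat (grInvol v * w) g h := by
  have : sigmaMat (grInvol v * w) g h = ((sigmaMat v)ᵀ * sigmaMat w) g h := by
    rw [sigma_transpose, ← sigma_mul]
  rw [this, Matrix.mul_apply]
  simp [Matrix.transpose_apply]

lemma sigma_dot_mul (v w : MonoidAlgebra R G) (g h : G) :
    ∑ k, sigmaMat v g k * sigmaMat w k h = sigmaMat (v * w) g h := by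
  rw [sigma_mul, Matrix.mul_apply]

end lemmas

theorem stmt1 {G : Type*} [Group G] [Fintype G] [DecidableEq G]
    (hodd : Odd (Fintype.card G))
    (v₁ v₂ : MonoidAlgebra (ZMod 2) G) (γ₁ γ₂ γ₃ γ₄ : ZMod 2)
    (A B : Matrix (Option G) (Option G) (ZMod 2))
    (hA : A = Matrix.of fun i j => match i, j with
      | none, none => γ₁
      | none, some _ => γ₂
      | some _, none => γ₂
      | some g, some h => sigmaMat v₁ g h)
    (hB : B = Matrix.of fun i j => match i, j with
      | none, none => γ₃
      | none, some _ => γ₄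
      | some _, none => γ₄
      | some g, some h => sigmaMat v₂ g h)
    (M : Matrix (Option G ⊕ Option G) (Option G ⊕ Option G) (ZMod 2))
    (hM : M = Matrix.fromBlocks A B Bᵀ Aᵀ)
    (h1 : v₁ * v₂ = v₂ * v₁)
    (h2 : γ₁ ^ 2 + γ₂ ^ 2 + γ₃ ^ 2 + γ₄ ^ 2 = 1)
    (h3 : v₁ * grInvol v₁ + v₂ * grInvol v₂ + (γ₂ + γ₄) ^ 2 • ghat (ZMod 2) G + 1 = 0)
    (h4 : grInvol v₁ * v₁ + grInvol v₂ * v₂ + (γ₂ + γ₄) ^ 2 • ghat (ZMod 2) G + 1 = 0)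
    (h5 : γ₁ = ∑ g : G, v₁.coeff g) (h5' : γ₃ = ∑ g : G, v₂.coeff g)
    -- the rows of the generator matrix `[I | M]`
    (gen : (Option G ⊕ Option G) →
      ((Option G ⊕ Option G) ⊕ (Option G ⊕ Option G)) → ZMod 2)
    (hgen : gen = fun i => Sum.elim (fun j => if i = j then 1 else 0) (fun j => M i j))
    (Cσ : Submodule (ZMod 2) (((Option G ⊕ Option G) ⊕ (Option G ⊕ Option G)) → ZMod 2))
    (hC : Cσ = Submodule.span (ZMod 2) (Set.range gen)) :
    Cσ = dualCode Cσ := by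
  classical
  have h0 : (2 : ZMod 2) = 0 := rfl
  have two : ∀ x : ZMod 2, x + x = 0 := by decide
  have hcard : ((Fintype.card G : ℕ) : ZMod 2) = 1 := by
    obtain ⟨k, hk⟩ := hodd
    rw [hk]; push_cast; rw [h0]; ring
  have hsum : ∀ c : ZMod 2, ∑ _g : G, c = c := by
    intro c
    rw [Finset.sum_const, Finset.card_univ, nsmul_eq_mul, hcard, one_mul]
  -- entries of A and B
  have hAnn : A none none = γ₁ := by rw [hA]; rfl
  have hAns : ∀ h : G, A none (some h) = γ₂ := fun h => by rw [hA]; rfl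
  have hAsn : ∀ g : G, A (some g) none = γ₂ := fun g => by rw [hA]; rfl
  have hAss : ∀ g h : G, A (some g) (some h) = sigmaMat v₁ g h := fun g h => by rw [hA]; rfl
  have hBnn : B none none = γ₃ := by rw [hB]; rfl
  have hBns : ∀ h : G, B none (some h) = γ₄ := fun h => by rw [hB]; rfl
  have hBsn : ∀ g : G, B (some g) none = γ₄ := fun g => by rw [hB]; rfl
  have hBss : ∀ g h : G, B (some g) (some h) = sigmaMat v₂ g h := fun g h => by rw [hB]; rfl
  -- entries of the identity matrix on Option G
  have h1nn : (1 : Matrix (Option G) (Option G) (ZMod 2)) none none = 1 := by simp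
  have h1ns : ∀ h : G, (1 : Matrix (Option G) (Option G) (ZMod 2)) none (some h) = 0 := by
    intro h; simp [Matrix.one_apply]
  have h1sn : ∀ g : G, (1 : Matrix (Option G) (Option G) (ZMod 2)) (some g) none = 0 := by
    intro g; simp [Matrix.one_apply]
  have h1ss : ∀ g h : G, (1 : Matrix (Option G) (Option G) (ZMod 2)) (some g) (some h)
      = (1 : Matrix G G (ZMod 2)) g h := by
    intro g h; by_cases hgh : g = h <;> simp [Matrix.one_apply, hgh]
  -- row and column sums
  have hr1 : ∀ g : G, ∑ k, sigmaMat v₁ g k = γ₁ := fun g => by rw [sigma_rowsum, ← h5]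
  have hr2 : ∀ g : G, ∑ k, sigmaMat v₂ g k = γ₃ := fun g => by rw [sigma_rowsum, ← h5']
  have hc1 : ∀ h : G, ∑ k, sigmaMat v₁ k h = γ₁ := fun h => by rw [sigma_colsum, ← h5]
  have hc2 : ∀ h : G, ∑ k, sigmaMat v₂ k h = γ₃ := fun h => by rw [sigma_colsum, ← h5']
  -- matrix versions of h3, h4
  have m3 : sigmaMat (v₁ * grInvol v₁) + sigmaMat (v₂ * grInvol v₂)
      + (γ₂ + γ₄) ^ 2 • sigmaMat (ghat (ZMod 2) G) + 1 = 0 := by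
    have := congrArg (sigmaMat (R := ZMod 2)) h3
    rwa [sigma_add, sigma_add, sigma_add, sigma_smul, sigma_one, sigma_zero] at this
  have m4 : sigmaMat (grInvol v₁ * v₁) + sigmaMat (grInvol v₂ * v₂)
      + (γ₂ + γ₄) ^ 2 • sigmaMat (ghat (ZMod 2) G) + 1 = 0 := by
    have := congrArg (sigmaMat (R := ZMod 2)) h4
    rwa [sigma_add, sigma_add, sigma_add, sigma_smul, sigma_one, sigma_zero] at this
  have m3e : ∀ g h : G, sigmaMat (v₁ * grInvol v₁) g h + sigmaMat (v₂ * grInvol v₂) g h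
      + (γ₂ + γ₄) ^ 2 + (1 : Matrix G G (ZMod 2)) g h = 0 := by
    intro g h
    have := congrFun (congrFun m3 g) h
    simpa [Matrix.add_apply, Matrix.smul_apply, smul_eq_mul,
      show sigmaMat (ghat (ZMod 2) G) g h = 1 from ghat_apply _] using this
  have m4e : ∀ g h : G, sigmaMat (grInvol v₁ * v₁) g h + sigmaMat (grInvol v₂ * v₂) g h
      + (γ₂ + γ₄) ^ 2 + (1 : Matrix G G (ZMod 2)) g h = 0 := by
    intro g h
    have := congrFun (congrFun m4 g) h
    simpa [Matrix.add_apply, Matrix.smul_apply, smul_eq_mul,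
      show sigmaMat (ghat (ZMod 2) G) g h = 1 from ghat_apply _] using this
  -- the key matrix identities
  have key1 : A * Aᵀ + B * Bᵀ = 1 := by
    ext i j
    rw [Matrix.add_apply, Matrix.mul_apply, Matrix.mul_apply]
    simp only [Matrix.transpose_apply]
    match i, j with
    | none, none =>
      simp only [Fintype.sum_option, hAnn, hAns, hBnn, hBns, hsum, h1nn]
      linear_combination h2
    | none, some h =>
      simp only [Fintype.sum_option, hAnn, hAns, hAsn, hAss, hBnn, hBns, hBsn, hBss, h1ns]
      rw [← Finset.mul_sum, ← Finset.mul_sum, hr1, hr2]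
      linear_combination (γ₁ * γ₂ + γ₃ * γ₄) * h0
    | some g, none =>
      simp only [Fintype.sum_option, hAnn, hAns, hAsn, hAss, hBnn, hBns, hBsn, hBss, h1sn]
      rw [← Finset.sum_mul, ← Finset.sum_mul, hr1, hr2]
      linear_combination (γ₁ * γ₂ + γ₃ * γ₄) * h0
    | some g, some h =>
      simp only [Fintype.sum_option, hAsn, hAss, hBsn, hBss, h1ss]
      rw [sigma_dot, sigma_dot]
      linear_combination m3e g h - (γ₂ * γ₄ + (1 : Matrix G G (ZMod 2)) g h) * h0
  have key1' : Aᵀ * A + Bᵀ * B = 1 := by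
    ext i j
    rw [Matrix.add_apply, Matrix.mul_apply, Matrix.mul_apply]
    simp only [Matrix.transpose_apply]
    match i, j with
    | none, none =>
      simp only [Fintype.sum_option, hAnn, hAsn, hBnn, hBsn, hsum, h1nn]
      linear_combination h2
    | none, some h =>
      simp only [Fintype.sum_option, hAnn, hAns, hAsn, hAss, hBnn, hBns, hBsn, hBss, h1ns]
      rw [← Finset.mul_sum, ← Finset.mul_sum, hc1, hc2]
      linear_combination (γ₁ * γ₂ + γ₃ * γ₄) * h0
    | some g, none =>
      simp only [Fintype.sum_option, hAnn, hAns, hAsn, hAss, hBnn, hBns, hBsn, hBss, h1sn]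
      rw [← Finset.sum_mul, ← Finset.sum_mul, hc1, hc2]
      linear_combination (γ₁ * γ₂ + γ₃ * γ₄) * h0
    | some g, some h =>
      simp only [Fintype.sum_option, hAns, hAss, hBns, hBss, h1ss]
      rw [sigma_dot', sigma_dot']
      linear_combination m4e g h - (γ₂ * γ₄ + (1 : Matrix G G (ZMod 2)) g h) * h0
  have key2 : A * B = B * A := by
    ext i j
    rw [Matrix.mul_apply, Matrix.mul_apply]
    match i, j with
    | none, none =>
      simp only [Fintype.sum_option, hAnn, hAns, hBnn, hBsn, hAsn, hBns, hsum]
      ring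
    | none, some h =>
      simp only [Fintype.sum_option, hAnn, hAns, hBns, hBss, hBnn, hAss]
      rw [← Finset.mul_sum, ← Finset.mul_sum, hc1, hc2]
      ring
    | some g, none =>
      simp only [Fintype.sum_option, hAsn, hAss, hBnn, hBsn, hBss, hAnn]
      rw [← Finset.sum_mul, ← Finset.sum_mul, hr1, hr2]
      ring
    | some g, some h =>
      simp only [Fintype.sum_option, hAsn, hAss, hBsn, hBss, hBns, hAns]
      rw [sigma_dot_mul, sigma_dot_mul, h1]
      ring
  have keyAB0 : A * B + B * A = 0 := by
    rw [key2]; ext i j; rw [Matrix.add_apply, Matrix.zero_apply]; exact two _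
  have keyBA0 : Bᵀ * Aᵀ + Aᵀ * Bᵀ = 0 := by
    rw [← Matrix.transpose_mul, ← Matrix.transpose_mul, key2]
    ext i j
    simp only [Matrix.add_apply, Matrix.transpose_apply, Matrix.zero_apply]
    exact two _
  have hMMT : M * Mᵀ = 1 := by
    rw [hM, Matrix.fromBlocks_transpose, Matrix.transpose_transpose, Matrix.transpose_transpose,
      Matrix.fromBlocks_multiply, key1, keyAB0, keyBA0,
      show Bᵀ * B + Aᵀ * A = 1 by rw [add_comm]; exact key1', Matrix.fromBlocks_one]
  have hMTM : Mᵀ * M = 1 := mul_eq_one_comm.mp hMMT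
  -- orthogonality of the generators
  have horth : ∀ i i', ∑ j, gen i j * gen i' j = 0 := by
    intro i i'
    rw [hgen]
    rw [Fintype.sum_sum_type]
    have e1 : ∑ j : Option G ⊕ Option G,
        (if i = j then (1 : ZMod 2) else 0) * (if i' = j then 1 else 0)
        = if i = i' then 1 else 0 := by
      simp [Finset.sum_ite_eq, eq_comm]
    have e2 : ∑ j, M i j * M i' j = if i = i' then 1 else 0 := by
      have : (M * Mᵀ) i i' = if i = i' then 1 else 0 := by rw [hMMT, Matrix.one_apply]
      rw [← this, Matrix.mul_apply]
      simp [Matrix.transpose_apply]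
    simp only [Sum.elim_inl, Sum.elim_inr]
    rw [e1, e2]
    exact two _
  have mem_dual : ∀ w, w ∈ dualCode Cσ ↔ ∀ v ∈ Cσ, ∑ i, v i * w i = 0 := fun w => Iff.rfl
  -- Cσ ⊆ dual
  have hsubC : Cσ ≤ dualCode Cσ := by
    rw [hC, Submodule.span_le]
    rintro w ⟨i, rfl⟩
    rw [← hC]
    show ∀ v ∈ Cσ, ∑ j, v j * gen i j = 0
    intro v hv
    rw [hC] at hv
    induction hv using Submodule.span_induction with
    | mem x hx => obtain ⟨i', rfl⟩ := hx; exact horth i' i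
    | zero => simp
    | add x y _ _ hx hy =>
      simp only [Pi.add_apply, add_mul, Finset.sum_add_distrib, hx, hy, add_zero]
    | smul c x _ hx =>
      have : ∑ j, (c • x) j * gen i j = c * ∑ j, x j * gen i j := by
        rw [Finset.mul_sum]
        exact Finset.sum_congr rfl fun j _ => by simp [mul_assoc]
      rw [this, hx, mul_zero]
  -- dual ⊆ Cσ
  have hdsub : dualCode Cσ ≤ Cσ := by
    intro w hw
    have hgenC : ∀ i, gen i ∈ Cσ := fun i => by
      rw [hC]; exact Submodule.subset_span ⟨i, rfl⟩
    set c : ((Option G ⊕ Option G) ⊕ (Option G ⊕ Option G)) → ZMod 2 :=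
      ∑ i, w (Sum.inl i) • gen i with hc
    have hcC : c ∈ Cσ :=
      Submodule.sum_mem _ fun i _ => Submodule.smul_mem _ _ (hgenC i)
    have hcl : ∀ i, c (Sum.inl i) = w (Sum.inl i) := by
      intro i
      rw [hc]
      rw [Finset.sum_apply]
      simp only [Pi.smul_apply, hgen, Sum.elim_inl, smul_eq_mul, mul_ite, mul_one, mul_zero]
      simp
    set z := w - c with hz
    have hz1 : ∀ i, z (Sum.inl i) = 0 := by
      intro i; rw [hz]; simp [hcl i]
    have hzd : z ∈ dualCode Cσ := Submodule.sub_mem _ hw (hsubC hcC)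
    have hz2 : ∀ i, ∑ j, M i j * z (Sum.inr j) = 0 := by
      intro i
      have := (mem_dual z).mp hzd (gen i) (hgenC i)
      rw [Fintype.sum_sum_type] at this
      simp only [hgen, Sum.elim_inl, Sum.elim_inr, ite_mul, one_mul, zero_mul] at this
      rw [Finset.sum_ite_eq] at this
      simp only [Finset.mem_univ, if_true, hz1 i, zero_add] at this
      exact this
    have hz3 : ∀ j, z (Sum.inr j) = 0 := by
      have hu : M.mulVec (fun j => z (Sum.inr j)) = 0 := by
        funext i; exact hz2 i
      have : Mᵀ.mulVec (M.mulVec (fun j => z (Sum.inr j))) = fun j => z (Sum.inr j) := by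
        rw [Matrix.mulVec_mulVec, hMTM, Matrix.one_mulVec]
      rw [hu, Matrix.mulVec_zero] at this
      intro j
      exact (congrFun this j).symm
    have hz0 : z = 0 := by
      funext j
      match j with
      | Sum.inl i => exact hz1 i
      | Sum.inr i => exact hz3 i
    have : w = c := by
      have := sub_eq_zero.mp (hz ▸ hz0)
      exact this
    rw [this]; exact hcC
  exact le_antisymm hsubC hdsub
end

section
/- Let R_k be the quotient of the multivariate polynomial ring MvPolynomial (Fin k) (ZMod 2) by the ideal generated by the squares X(i)² of all the variables. Let G be a finite group of odd order, let v₁, v₂ ∈ R_k[G], and let γ₂, γ₄ ∈ R_k with γ₂ + γ₄ a non-unit of R_k. Suppose v₁v₁* + v₂v₂* + (γ₂+γ₄)²·ĝ + 1 = 0 in R_k[G] and that v₁ is a unitary unit, i.e. v₁v₁* = 1. Then v₂ is not a unit of the group algebra R_k[G]. -/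
set_option synthInstance.maxHeartbeats 1000000
set_option maxHeartbeats 1000000


/-- The ring `R_k = 𝔽₂[u₁,…,u_k]/(uᵢ²)`. -/
abbrev Rk (k : ℕ) : Type :=
  MvPolynomial (Fin k) (ZMod 2) ⧸
    Ideal.span (Set.range fun i : Fin k => (MvPolynomial.X i : MvPolynomial (Fin k) (ZMod 2)) ^ 2)

theorem stmt3 {k : ℕ} {G : Type*} [Group G] [Fintype G]
    (hodd : Odd (Fintype.card G))
    (v₁ v₂ : MonoidAlgebra (Rk k) G) (γ₂ γ₄ : Rk k)
    (hγ : ¬ IsUnit (γ₂ + γ₄))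
    (h3 : v₁ * grInvol v₁ + v₂ * grInvol v₂ + (γ₂ + γ₄) ^ 2 • ghat (Rk k) G + 1 = 0)
    (hu : v₁ * grInvol v₁ = 1) :
    ¬ IsUnit v₂ := by
  intro hv
  have h2 : (2 : Rk k) = 0 := by
    have h := map_ofNat (algebraMap (ZMod 2) (Rk k)) 2
    rw [← h, show (2 : ZMod 2) = 0 from rfl, map_zero]
  set ε : MonoidAlgebra (Rk k) G →ₐ[Rk k] Rk k := MonoidAlgebra.lift (Rk k) (Rk k) G 1 with hε
  have hεinv : ∀ v : MonoidAlgebra (Rk k) G, ε (grInvol v) = ε v := by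
    intro v
    rw [hε, MonoidAlgebra.lift_apply, MonoidAlgebra.lift_apply, grInvol, MonoidAlgebra.coeff_ofCoeff,
      Finsupp.sum_equivMapDomain]
    simp
  have hcard : ((Fintype.card G : ℕ) : Rk k) = 1 := by
    obtain ⟨m, hm⟩ := hodd
    push_cast [hm]
    rw [h2]; ring
  have hghat : ε (ghat (Rk k) G) = 1 := by
    rw [ghat, map_sum]
    simp only [hε, MonoidAlgebra.of_apply, MonoidAlgebra.lift_single, one_smul, MonoidHom.one_apply, Finset.sum_const, nsmul_eq_mul, Finset.card_univ, mul_one]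
    exact hcard
  rw [hu] at h3
  have happ := congrArg ε h3
  rw [map_add, map_add, map_add, map_mul, map_one, map_zero,
    map_smul, hghat, hεinv, smul_eq_mul, mul_one] at happ
  have key : (γ₂ + γ₄) ^ 2 = ε v₂ * ε v₂ := by
    linear_combination ((γ₂ + γ₄) ^ 2 + 1) * h2 - happ
  have hunit : IsUnit ((γ₂ + γ₄) * (γ₂ + γ₄)) := by
    rw [← sq, key]
    exact (hv.map ε).mul (hv.map ε)
  exact hγ (isUnit_of_mul_isUnit_left hunit)
end

section
/- Let R_k be the quotient of the multivariate polynomial ring MvPolynomial (Fin k) (ZMod 2) by the ideal generated by the squares X(i)² of all the variables. Let G be a finite group of odd order, let v₁, v₂ ∈ R_k[G], and let γ₂, γ₄ ∈ R_k with (γ₂ + γ₄)² = 1. Suppose v₁*v₁ + v₂*v₂ + (γ₂+γ₄)²·ĝ + 1 = 0 in R_k[G]. Then v₁*v₁ + v₂*v₂ is not a unit of the group algebra R_k[G]. -/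
/-!
The hypothesis forces `v₁*v₁ + v₂*v₂ = -(ĝ + 1)`. Reducing the coefficients modulo the
`uᵢ` and then applying the augmentation `g ↦ 1` is a ring map `R_k[G] → 𝔽₂` sending `ĝ` to
`|G| = 1`, hence `ĝ + 1` to `0`; so `ĝ + 1` is not a unit.
-/

noncomputable def Rk.constantCoeff (k : ℕ) : Rk k →+* ZMod 2 :=
  Ideal.Quotient.lift _ MvPolynomial.constantCoeff fun a ha => by
    refine (Ideal.span_le (I := RingHom.ker _)).2 ?_ ha
    rintro _ ⟨i, rfl⟩
    simp [RingHom.mem_ker]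

theorem not_isUnit_ghat_add_one {R : Type*} [CommRing R] {G : Type*} [Group G] [Fintype G]
    {K : Type*} [CommRing K] [Nontrivial K] [CharP K 2] (f : R →+* K)
    (hodd : Odd (Fintype.card G)) : ¬ IsUnit (ghat R G + 1) := by
  let φ : MonoidAlgebra R G →+* K :=
    MonoidAlgebra.liftNCRingHom f 1 fun _ _ => Commute.one_right _
  have hφ : φ (ghat R G + 1) = 0 := by
    have hcard : ((Fintype.card G + 1 : ℕ) : K) = 0 :=
      (CharP.cast_eq_zero_iff K 2 _).2 (even_iff_two_dvd.1 hodd.add_one)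
    simpa [φ, ghat, MonoidAlgebra.liftNCRingHom, MonoidAlgebra.liftNC_single] using hcard
  exact fun hu => not_isUnit_zero (hφ ▸ hu.map φ)

theorem stmt4 {k : ℕ} {G : Type*} [Group G] [Fintype G]
    (hodd : Odd (Fintype.card G))
    (v₁ v₂ : MonoidAlgebra (Rk k) G) (γ₂ γ₄ : Rk k)
    (hγ : (γ₂ + γ₄) ^ 2 = 1)
    (h4 : grInvol v₁ * v₁ + grInvol v₂ * v₂ + (γ₂ + γ₄) ^ 2 • ghat (Rk k) G + 1 = 0) :
    ¬ IsUnit (grInvol v₁ * v₁ + grInvol v₂ * v₂) := by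
  rw [hγ, one_smul, add_assoc] at h4
  rw [eq_neg_of_add_eq_zero_left h4, IsUnit.neg_iff]
  exact not_isUnit_ghat_add_one (Rk.constantCoeff k) hodd
end

section
/- Let R be a commutative ring of characteristic 2 and let n be an odd natural number. Then the n×n matrix over R whose diagonal entries are 0 and whose off-diagonal entries are all 1 has determinant 0. -/
open Matrix

theorem Matrix.of_ite_eq_zero_one_mulVec_one {ι R : Type*} [Fintype ι] [DecidableEq ι]
    [CommRing R] :
    (of fun i j : ι => if i = j then (0 : R) else 1) *ᵥ (fun _ => 1) =
      fun _ => (Fintype.card ι : R) - 1 := by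
  ext i
  have : Nonempty ι := ⟨i⟩
  simp [mulVec, dotProduct, Finset.sum_ite, Finset.filter_ne, Nat.cast_sub Fintype.card_pos]

theorem stmt5 {R : Type*} [CommRing R] [CharP R 2] (n : ℕ) (hn : Odd n) :
    (Matrix.of fun i j : Fin n => if i = j then (0 : R) else 1).det = 0 := by
  have hrows : (of fun i j : Fin n => if i = j then (0 : R) else 1) *ᵥ (fun _ => 1) = 0 := by
    rw [of_ite_eq_zero_one_mulVec_one, Fintype.card_fin,
      natCast_eq_one_of_odd_of_two_eq_zero hn CharTwo.two_eq_zero, sub_self]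
    rfl
  exact det_eq_zero_of_mulVec_eq_zero_of_mem_nonZeroDivisors hrows (i := ⟨0, hn.pos⟩)
    (one_mem _)
end

section
/- Let R_k be the quotient of the multivariate polynomial ring MvPolynomial (Fin k) (ZMod 2) by the ideal generated by the squares X(i)² of all the variables. Then for every element α of R_k: if α is a unit then α² = 1, and if α is not a unit then α² = 0. -/
/-!
Modulo the `p`-th powers of the variables, the Frobenius map `q ↦ q ^ p` kills every variable
and fixes every coefficient in `ZMod p`, so `q ^ p` reduces to the constant term of `q`.
For `p = 2` this constant is `0` or `1`: in the first case `α` is nilpotent, in the second `α`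
is its own inverse.
-/

open MvPolynomial

namespace MvPolynomial

variable (σ R : Type*) [CommRing R]

noncomputable abbrev powVarsIdeal (n : ℕ) : Ideal (MvPolynomial σ R) :=
  Ideal.span (Set.range fun i => (X i : MvPolynomial σ R) ^ n)

variable {σ R}

theorem powVarsIdeal_le_ker_constantCoeff {n : ℕ} (hn : n ≠ 0) :
    powVarsIdeal σ R n ≤ RingHom.ker (constantCoeff (σ := σ) (R := R)) := by
  rw [Ideal.span_le]
  rintro _ ⟨i, rfl⟩
  simp [RingHom.mem_ker, hn]

theorem nontrivial_quotient_powVarsIdeal [Nontrivial R] {n : ℕ} (hn : n ≠ 0) :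
    Nontrivial (MvPolynomial σ R ⧸ powVarsIdeal σ R n) :=
  (Ideal.Quotient.lift _ constantCoeff (powVarsIdeal_le_ker_constantCoeff hn)).domain_nontrivial

theorem mk_pow_char_eq_constantCoeff (p : ℕ) [Fact p.Prime] (q : MvPolynomial σ (ZMod p)) :
    Ideal.Quotient.mk (powVarsIdeal σ (ZMod p) p) (q ^ p) =
      algebraMap (ZMod p) _ (constantCoeff q) := by
  have hfrob : (Ideal.Quotient.mk (powVarsIdeal σ (ZMod p) p)).comp (frobenius _ p) =
      (algebraMap (ZMod p) _).comp constantCoeff := by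
    refine ringHom_ext (fun r => ?_) (fun i => ?_)
    · simp only [RingHom.comp_apply, frobenius_def, ← C_pow, ZMod.pow_card, constantCoeff_C]
      rfl
    · have hX : (X i : MvPolynomial σ (ZMod p)) ^ p ∈ powVarsIdeal σ (ZMod p) p :=
        Ideal.subset_span ⟨i, rfl⟩
      simp [frobenius_def, Ideal.Quotient.eq_zero_iff_mem.mpr hX]
  simpa [frobenius_def] using RingHom.congr_fun hfrob q

end MvPolynomial

theorem stmt8 (k : ℕ) (α : Rk k) :
    (IsUnit α → α ^ 2 = 1) ∧ (¬ IsUnit α → α ^ 2 = 0) := by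
  have : Nontrivial (Rk k) := nontrivial_quotient_powVarsIdeal two_ne_zero
  obtain ⟨q, rfl⟩ := Ideal.Quotient.mk_surjective α
  have hsq : Ideal.Quotient.mk _ q ^ 2 = algebraMap (ZMod 2) (Rk k) (constantCoeff q) := by
    rw [← map_pow, mk_pow_char_eq_constantCoeff]
  rcases (by decide : ∀ c : ZMod 2, c = 0 ∨ c = 1) (constantCoeff q) with h | h
  · rw [h, map_zero] at hsq
    exact ⟨fun hu => absurd hsq (hu.pow 2).ne_zero, fun _ => hsq⟩
  · rw [h, map_one] at hsq
    exact ⟨fun _ => hsq, fun hnu => absurd (.of_pow_eq_one hsq two_ne_zero) hnu⟩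
end

section
/- Let R = 𝔽₂ + u𝔽₂ (u² = 0), realized as DualNumber (ZMod 2), and let φ : R → (ZMod 2) × (ZMod 2) be the Gray map φ(a + bu) = (b, a + b). Let Φ : Rⁿ → (ZMod 2)^{2n} be φ applied coordinatewise (so Φ(v) ∈ (Fin n → ZMod 2 × ZMod 2), identified with a binary vector of length 2n). If C is a submodule of Rⁿ with C = C⊥ (self-dual with respect to the form ∑ᵢ vᵢwᵢ over R), then the image Φ(C), which is a ZMod 2-subspace of (ZMod 2)^{2n}, satisfies Φ(C) = Φ(C)⊥ with respect to the form summing the products of all 2n binary coordinates; i.e. the image is a binary self-dual code of length 2n. -/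
/-!
The Gray map is a bijection `𝔽₂ + u𝔽₂ → 𝔽₂²` under which the binary dot product of the images
of `x` and `y` becomes `a + b`, where `a + bu = ∑ᵢ xᵢyᵢ`. Hence `Φ(C)` is self-orthogonal when
`C` is. Conversely, if `Φ(x)` is orthogonal to `Φ(C)`, then for `z ∈ C` with `s = z · x` both `s`
and `u s = (s.fst) u` (using `uz ∈ C`) have vanishing `fst + snd`, which forces `s = 0`; thus
`x ∈ C⊥ = C`.
-/

/-- The Gray map `φ(a + bu) = (b, a + b)` on `𝔽₂ + u𝔽₂ = DualNumber (ZMod 2)`. -/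
def grayMap (x : DualNumber (ZMod 2)) : ZMod 2 × ZMod 2 :=
  (x.snd, x.fst + x.snd)

open DualNumber

lemma mem_dualCode {R : Type*} [CommRing R] {ι : Type*} [Fintype ι]
    {C : Submodule R (ι → R)} {w : ι → R} :
    w ∈ dualCode C ↔ ∀ v ∈ C, ∑ i, v i * w i = 0 :=
  Iff.rfl

lemma DualNumber.eq_zero_of_fst_add_snd_eq_zero {R : Type*} [Semiring R] {s : R[ε]}
    (hs : s.fst + s.snd = 0) (hεs : (ε * s).fst + (ε * s).snd = 0) : s = 0 := by
  have hfst : s.fst = 0 := by simpa using hεs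
  have hsnd : s.snd = 0 := by rwa [hfst, zero_add] at hs
  exact TrivSqZeroExt.ext hfst hsnd

lemma grayMap_surjective : Function.Surjective grayMap := by
  rintro ⟨s, t⟩
  refine ⟨((t + s, s) : ZMod 2 × ZMod 2), ?_⟩
  revert s t
  decide

lemma grayMap_dot (x y : DualNumber (ZMod 2)) :
    (grayMap x).1 * (grayMap y).1 + (grayMap x).2 * (grayMap y).2 = (x * y).fst + (x * y).snd := by
  simp only [grayMap, TrivSqZeroExt.fst_mul, TrivSqZeroExt.snd_mul, smul_eq_mul,
    MulOpposite.smul_eq_mul_unop, MulOpposite.unop_op]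
  generalize x.fst = a, x.snd = b, y.fst = c, y.snd = d
  revert a b c d
  decide

lemma sum_grayMap_dot {ι : Type*} [Fintype ι] (x y : ι → DualNumber (ZMod 2)) :
    ∑ i, ((grayMap (x i)).1 * (grayMap (y i)).1 + (grayMap (x i)).2 * (grayMap (y i)).2)
      = (∑ i, x i * y i).fst + (∑ i, x i * y i).snd := by
  simp only [grayMap_dot, TrivSqZeroExt.fst_sum, TrivSqZeroExt.snd_sum, Finset.sum_add_distrib]

theorem stmt9 {n : ℕ}
    (Φ : (Fin n → DualNumber (ZMod 2)) → (Fin n → ZMod 2 × ZMod 2))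
    (hΦ : Φ = fun v i => grayMap (v i))
    (C : Submodule (DualNumber (ZMod 2)) (Fin n → DualNumber (ZMod 2)))
    (hC : C = dualCode C) :
    Φ '' (C : Set (Fin n → DualNumber (ZMod 2))) =
      {w : Fin n → ZMod 2 × ZMod 2 |
        ∀ v ∈ Φ '' (C : Set (Fin n → DualNumber (ZMod 2))),
          ∑ i, ((v i).1 * (w i).1 + (v i).2 * (w i).2) = 0} := by
  subst hΦ
  ext w
  constructor
  · rintro ⟨x, hx, rfl⟩ _ ⟨z, hz, rfl⟩
    rw [sum_grayMap_dot, mem_dualCode.mp (hC ▸ hx) z hz, TrivSqZeroExt.fst_zero,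
      TrivSqZeroExt.snd_zero, add_zero]
  · intro hw
    obtain ⟨x, rfl⟩ := Function.Surjective.piMap (fun _ => grayMap_surjective) w
    refine ⟨x, hC ▸ mem_dualCode.mpr fun z hz => ?_, rfl⟩
    have hεz : ∑ i, ((ε : DualNumber (ZMod 2)) • z) i * x i = ε * ∑ i, z i * x i := by
      simp only [Pi.smul_apply, smul_eq_mul, mul_assoc, Finset.mul_sum]
    have hz_orth := hw _ ⟨z, hz, rfl⟩
    have hεz_orth := hw _ ⟨ε • z, C.smul_mem ε hz, rfl⟩
    simp only [Pi.map_apply, sum_grayMap_dot, hεz] at hz_orth hεz_orth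
    exact eq_zero_of_fst_add_snd_eq_zero hz_orth hεz_orth
end

section
/- Let R = 𝔽₂ + u𝔽₂ (u² = 0), realized as DualNumber (ZMod 2). Let C ⊆ Rⁿ be a self-dual code (C = C⊥ under the form ∑ᵢ vᵢwᵢ) which is spanned as an R-module by vectors r₁, …, r_m ∈ Rⁿ. Let c be a unit of R and let X ∈ Rⁿ satisfy ⟨X, X⟩ = 1, where ⟨v, w⟩ = ∑ᵢ vᵢwᵢ. For each i let yᵢ = ⟨rᵢ, X⟩. Then the R-submodule of R^{n+2} spanned by the vector (1, 0, X) together with the vectors (yᵢ, c·yᵢ, rᵢ) for i = 1, …, m is a self-dual code of length n + 2. -/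
open Matrix Submodule

instance DualNumber.charP {K : Type*} [CommRing K] (p : ℕ) [CharP K p] :
    CharP (DualNumber K) p :=
  charP_of_injective_algebraMap
    (by rw [TrivSqZeroExt.algebraMap_eq_inl]; exact TrivSqZeroExt.inl_injective) p

theorem DualNumber.mul_self_eq_one_of_isUnit {c : DualNumber (ZMod 2)} (hc : IsUnit c) :
    c * c = 1 := by
  have hfst : c.fst = 1 := by
    have := TrivSqZeroExt.isUnit_iff_isUnit_fst.mp hc
    revert this
    generalize c.fst = a
    decide +revert
  ext
  · simp [hfst]
  · simpa [hfst] using CharTwo.add_self_eq_zero c.snd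

section DualCode

variable {R ι : Type*} [CommRing R] [Fintype ι]

theorem le_dualCode_iff {C : Submodule R (ι → R)} :
    C ≤ dualCode C ↔ ∀ v ∈ C, ∀ w ∈ C, v ⬝ᵥ w = 0 :=
  ⟨fun h v hv _ hw => h hw v hv, fun h w hw v hv => h v hv w hw⟩

end DualCode

namespace BuildUp

variable {R : Type*} [CommRing R] {n : ℕ} (c : R) (X : Fin n → R)

def vector : Fin (n + 2) → R := vecCons 1 (vecCons 0 X)

def extend : (Fin n → R) →ₗ[R] (Fin (n + 2) → R) where
  toFun v := vecCons (v ⬝ᵥ X) (vecCons (c * (v ⬝ᵥ X)) v)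
  map_add' u v := by simp [add_dotProduct, mul_add]
  map_smul' t v := by simp [smul_dotProduct, mul_left_comm]

theorem extend_apply (v : Fin n → R) :
    extend c X v = vecCons (v ⬝ᵥ X) (vecCons (c * (v ⬝ᵥ X)) v) := rfl

def code (C : Submodule R (Fin n → R)) : Submodule R (Fin (n + 2) → R) :=
  (R ∙ vector X) ⊔ C.map (extend c X)

theorem span_vector_union_range_extend {ι : Type*} (r : ι → Fin n → R) :
    span R ({vector X} ∪ Set.range fun i => extend c X (r i)) =
      code c X (span R (Set.range r)) := by
  rw [code, span_union, map_span, ← Set.range_comp]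
  rfl

theorem extend_dotProduct_cons_cons (a b : R) (z v : Fin n → R) :
    extend c X v ⬝ᵥ vecCons a (vecCons b z) = v ⬝ᵥ (z + (a + c * b) • X) := by
  simp only [extend_apply, cons_dotProduct_cons, dotProduct_add, dotProduct_smul, smul_eq_mul]
  ring

section CharTwo

variable [CharP R 2] {c X}

theorem vector_dotProduct_self (hX : X ⬝ᵥ X = 1) : vector X ⬝ᵥ vector X = 0 := by
  simp [vector, hX, CharTwo.add_self_eq_zero]

theorem vector_dotProduct_extend (v : Fin n → R) : vector X ⬝ᵥ extend c X v = 0 := by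
  simp [vector, extend_apply, dotProduct_comm X v, CharTwo.add_self_eq_zero]

theorem extend_dotProduct_extend (hc : c * c = 1) (u v : Fin n → R) :
    extend c X u ⬝ᵥ extend c X v = u ⬝ᵥ v := by
  simp only [extend_apply, cons_dotProduct_cons]
  linear_combination (u ⬝ᵥ X * (v ⬝ᵥ X)) * hc + CharTwo.add_self_eq_zero (u ⬝ᵥ X * (v ⬝ᵥ X))

theorem code_le_dualCode (hc : c * c = 1) (hX : X ⬝ᵥ X = 1) {C : Submodule R (Fin n → R)}
    (hC : C ≤ dualCode C) : code c X C ≤ dualCode (code c X C) := by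
  rw [le_dualCode_iff] at hC ⊢
  rintro _ hv _ hw
  obtain ⟨_, hs, _, ⟨u, hu, rfl⟩, rfl⟩ := mem_sup.mp hv
  obtain ⟨_, ht, _, ⟨u', hu', rfl⟩, rfl⟩ := mem_sup.mp hw
  obtain ⟨s, rfl⟩ := mem_span_singleton.mp hs
  obtain ⟨t, rfl⟩ := mem_span_singleton.mp ht
  simp only [add_dotProduct, dotProduct_add, smul_dotProduct, dotProduct_smul,
    vector_dotProduct_self hX, vector_dotProduct_extend, dotProduct_comm (extend c X u) (vector X),
    extend_dotProduct_extend hc, hC u hu u' hu', smul_zero, add_zero]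

theorem cons_cons_eq_smul_vector_add_extend (hc : c * c = 1) (hX : X ⬝ᵥ X = 1) {a b : R}
    {z : Fin n → R} (h : vector X ⬝ᵥ vecCons a (vecCons b z) = 0) :
    vecCons a (vecCons b z) = (a + c * b) • vector X + extend c X (z + (a + c * b) • X) := by
  have hzX : z ⬝ᵥ X = a := by
    simpa [vector, dotProduct_comm X z, CharTwo.add_eq_zero, eq_comm] using h
  have hz'X : (z + (a + c * b) • X) ⬝ᵥ X = c * b := by
    rw [add_dotProduct, smul_dotProduct, hzX, hX, smul_eq_mul]
    linear_combination CharTwo.add_self_eq_zero a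
  rw [extend_apply, hz'X, vector, smul_cons, smul_cons, cons_add_cons, cons_add_cons]
  congr 2
  · linear_combination -CharTwo.add_self_eq_zero (c * b)
  · linear_combination -b * hc
  · ext i
    simp only [Pi.add_apply, Pi.smul_apply]
    linear_combination -CharTwo.add_self_eq_zero ((a + c * b) • X i)

theorem dualCode_code_le (hc : c * c = 1) (hX : X ⬝ᵥ X = 1) {C : Submodule R (Fin n → R)}
    (hC : dualCode C ≤ C) : dualCode (code c X C) ≤ code c X C := by
  intro w hw
  obtain ⟨a, b, z, rfl⟩ : ∃ a b z, w = vecCons a (vecCons b z) :=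
    ⟨_, _, _, by rw [cons_head_tail, cons_head_tail]⟩
  have hv : vector X ∈ code c X C := mem_sup_left (mem_span_singleton_self _)
  have hz : z + (a + c * b) • X ∈ C := hC fun v hv =>
    (extend_dotProduct_cons_cons c X a b z v).symm.trans (hw _ (mem_sup_right (mem_map_of_mem hv)))
  rw [cons_cons_eq_smul_vector_add_extend hc hX (hw _ hv)]
  exact add_mem (smul_mem _ _ hv) (mem_sup_right (mem_map_of_mem hz))

theorem code_eq_dualCode (hc : c * c = 1) (hX : X ⬝ᵥ X = 1) {C : Submodule R (Fin n → R)}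
    (hC : C = dualCode C) : code c X C = dualCode (code c X C) :=
  le_antisymm (code_le_dualCode hc hX hC.le) (dualCode_code_le hc hX hC.ge)

end CharTwo

end BuildUp

theorem stmt10 {n m : ℕ}
    (C : Submodule (DualNumber (ZMod 2)) (Fin n → DualNumber (ZMod 2)))
    (hC : C = dualCode C)
    (r : Fin m → (Fin n → DualNumber (ZMod 2)))
    (hspan : C = Submodule.span (DualNumber (ZMod 2)) (Set.range r))
    (c : DualNumber (ZMod 2)) (hc : IsUnit c)
    (X : Fin n → DualNumber (ZMod 2)) (hX : ∑ i, X i * X i = 1)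
    (y : Fin m → DualNumber (ZMod 2)) (hy : y = fun i => ∑ j, r i j * X j)
    (D : Submodule (DualNumber (ZMod 2)) (Fin (n + 2) → DualNumber (ZMod 2)))
    (hD : D = Submodule.span (DualNumber (ZMod 2))
      ({Fin.cons 1 (Fin.cons 0 X)} ∪
        Set.range fun i => Fin.cons (y i) (Fin.cons (c * y i) (r i)))) :
    D = dualCode D := by
  -- `Fin.cons` is `vecCons` and `yᵢ` is `rᵢ ⬝ᵥ X` by definition, so `exact` closes the goal.
  have hD' : D = BuildUp.code c X C := by
    subst hy
    rw [hD, hspan]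
    exact BuildUp.span_vector_union_range_extend c X r
  rw [hD']
  exact BuildUp.code_eq_dualCode (DualNumber.mul_self_eq_one_of_isUnit hc) hX hC
end

section
/- Let 𝔽₄ = GaloisField 2 2 and let S = 𝔽₄ + u𝔽₄ (u² = 0), realized as DualNumber (GaloisField 2 2). Let φ : S → 𝔽₄ × 𝔽₄ be the map φ(a + bu) = (b, a + b), and let Φ : Sⁿ → 𝔽₄^{2n} be φ applied coordinatewise. If C ⊆ Sⁿ is self-orthogonal, i.e. ∑ᵢ vᵢwᵢ = 0 for all v, w ∈ C, then the image Φ(C) ⊆ 𝔽₄^{2n} is self-orthogonal: ∑ over all 2n coordinates of the products of any two image vectors is 0 in 𝔽₄. -/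
/-- The Gray map `φ(a + bu) = (b, a + b)` on `𝔽₄ + u𝔽₄ = DualNumber 𝔽₄`. -/
noncomputable def grayMapF4 (x : DualNumber (GaloisField 2 2)) : GaloisField 2 2 × GaloisField 2 2 :=
  (x.snd, x.fst + x.snd)

/-- `bb' + (a + b)(a' + b') = aa' + (ab' + ba') + 2bb'` for `x = a + bu`, `y = a' + b'u`. -/
theorem DualNumber.snd_mul_snd_add_fst_add_snd_mul {R : Type*} [CommRing R] [CharP R 2]
    (x y : DualNumber R) :
    x.snd * y.snd + (x.fst + x.snd) * (y.fst + y.snd) = (x * y).fst + (x * y).snd := by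
  simp only [TrivSqZeroExt.fst_mul, TrivSqZeroExt.snd_mul, smul_eq_mul, MulOpposite.smul_eq_mul_unop,
    MulOpposite.unop_op]
  linear_combination x.snd * y.snd * CharTwo.two_eq_zero (R := R)

theorem stmt11 {n : ℕ}
    (Φ : (Fin n → DualNumber (GaloisField 2 2)) → (Fin n → GaloisField 2 2 × GaloisField 2 2))
    (hΦ : Φ = fun v i => grayMapF4 (v i))
    (C : Set (Fin n → DualNumber (GaloisField 2 2)))
    (hC : ∀ v ∈ C, ∀ w ∈ C, ∑ i, v i * w i = 0) :
    ∀ v' ∈ Φ '' C, ∀ w' ∈ Φ '' C,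
      ∑ i, ((v' i).1 * (w' i).1 + (v' i).2 * (w' i).2) = 0 := by
  subst hΦ
  rintro _ ⟨v, hv, rfl⟩ _ ⟨w, hw, rfl⟩
  calc ∑ i, ((grayMapF4 (v i)).1 * (grayMapF4 (w i)).1 + (grayMapF4 (v i)).2 * (grayMapF4 (w i)).2)
      = ∑ i, ((v i * w i).fst + (v i * w i).snd) := by
        simp only [grayMapF4, DualNumber.snd_mul_snd_add_fst_add_snd_mul]
    _ = (∑ i, v i * w i).fst + (∑ i, v i * w i).snd := by
        rw [TrivSqZeroExt.fst_sum, TrivSqZeroExt.snd_sum, Finset.sum_add_distrib]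
    _ = 0 := by simp [hC v hv w hw]
end
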